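/- Let T : n → End(n) be a linear map satisfying equation (AS1) and such that T_X X = 0 for all X ∈ n. Then (∇_X ric)(X,X) = 0 for all X ∈ n. (This is the 2-step nilpotent instance of: every naturally reductive Riemannian manifold is of Type A.) -/

import Mathlib

open scoped RealInnerProductSpace

variable {v z : Type*}
  [NormedAddCommGroup v] [InnerProductSpace ℝ v] [FiniteDimensional ℝ v]
  [NormedAddCommGroup z] [InnerProductSpace ℝ z] [FiniteDimensional ℝ z]

/-- The Levi-Civita connection of the 2-step nilpotent Lie group `N(j)` evaluated on
left-invariant vector fields: `∇_V X = −½ j_{V^z} X^v − ½ j_{X^z} V^v + ½ [V^v, X^v]`,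
where `[x, y] = β x y`. -/
noncomputable def nabla (j : z →ₗ[ℝ] v →ₗ[ℝ] v) (β : v →ₗ[ℝ] v →ₗ[ℝ] z)
    (V X : v × z) : v × z :=
  (-((1/2 : ℝ) • j V.2 X.1) - (1/2 : ℝ) • j X.2 V.1, (1/2 : ℝ) • β V.1 X.1)

/-- `J = Σ_k j_{z_k} ∘ j_{z_k}` for an orthonormal basis `{z_k}` of `z`. -/
noncomputable def Jmap {m : ℕ} (j : z →ₗ[ℝ] v →ₗ[ℝ] v)
    (zb : OrthonormalBasis (Fin m) ℝ z) (x : v) : v :=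
  ∑ k, j (zb k) (j (zb k) x)

/-- `B a = Σ_i [v_i, j_a v_i]` for an orthonormal basis `{v_i}` of `v`. -/
noncomputable def Bmap {n : ℕ} (j : z →ₗ[ℝ] v →ₗ[ℝ] v) (β : v →ₗ[ℝ] v →ₗ[ℝ] z)
    (vb : OrthonormalBasis (Fin n) ℝ v) (a : z) : z :=
  ∑ i, β (vb i) (j a (vb i))

/-- The Ricci operator `ρ(X) = ½ J(X^v) + ¼ B(X^z)`. -/
noncomputable def rho {n m : ℕ} (j : z →ₗ[ℝ] v →ₗ[ℝ] v) (β : v →ₗ[ℝ] v →ₗ[ℝ] z)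
    (vb : OrthonormalBasis (Fin n) ℝ v) (zb : OrthonormalBasis (Fin m) ℝ z)
    (X : v × z) : v × z :=
  ((1/2 : ℝ) • Jmap j zb X.1, (1/4 : ℝ) • Bmap j β vb X.2)

/-- The Ricci tensor `ric(X,Y) = ⟨ρ(X), Y⟩` (product inner product on `n = v × z`). -/
noncomputable def ric {n m : ℕ} (j : z →ₗ[ℝ] v →ₗ[ℝ] v) (β : v →ₗ[ℝ] v →ₗ[ℝ] z)
    (vb : OrthonormalBasis (Fin n) ℝ v) (zb : OrthonormalBasis (Fin m) ℝ z)
    (X Y : v × z) : ℝ :=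
  ⟪(rho j β vb zb X).1, Y.1⟫ + ⟪(rho j β vb zb X).2, Y.2⟫

/-- The covariant derivative of the Ricci tensor,
`(∇_X ric)(Y,Z) = ⟨∇_X(ρ(Y)) − ρ(∇_X Y), Z⟩`. -/
noncomputable def nablaRic {n m : ℕ} (j : z →ₗ[ℝ] v →ₗ[ℝ] v) (β : v →ₗ[ℝ] v →ₗ[ℝ] z)
    (vb : OrthonormalBasis (Fin n) ℝ v) (zb : OrthonormalBasis (Fin m) ℝ z)
    (X Y Z : v × z) : ℝ :=
  ⟪(nabla j β X (rho j β vb zb Y) - rho j β vb zb (nabla j β X Y)).1, Z.1⟫ +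
    ⟪(nabla j β X (rho j β vb zb Y) - rho j β vb zb (nabla j β X Y)).2, Z.2⟫

/-- The curvature `R(X,Y)Z = ∇_X(∇_Y Z) − ∇_Y(∇_X Z) − ∇_{[X,Y]} Z`, where
`[X,Y] = (0, β(X^v, Y^v))`. -/
noncomputable def Rcurv (j : z →ₗ[ℝ] v →ₗ[ℝ] v) (β : v →ₗ[ℝ] v →ₗ[ℝ] z)
    (X Y Z : v × z) : v × z :=
  nabla j β X (nabla j β Y Z) - nabla j β Y (nabla j β X Z) -
    nabla j β ((0 : v), β X.1 Y.1) Z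

/-- The Ambrose–Singer equation (AS1): `∇R` is expressed through `T`. -/
def AS1 (j : z →ₗ[ℝ] v →ₗ[ℝ] v) (β : v →ₗ[ℝ] v →ₗ[ℝ] z)
    (T : v × z →ₗ[ℝ] Module.End ℝ (v × z)) : Prop :=
  ∀ V X Y Z : v × z,
    nabla j β V (Rcurv j β X Y Z) - Rcurv j β (nabla j β V X) Y Z -
        Rcurv j β X (nabla j β V Y) Z - Rcurv j β X Y (nabla j β V Z) =
      T V (Rcurv j β X Y Z) - Rcurv j β (T V X) Y Z -
        Rcurv j β X (T V Y) Z - Rcurv j β X Y (T V Z)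


set_option linter.unusedSectionVars false

lemma jself (j : z →ₗ[ℝ] v →ₗ[ℝ] v)
    (hskew : ∀ (a : z) (x y : v), ⟪j a x, y⟫ = -⟪x, j a y⟫) (c : z) (u : v) :
    ⟪j c u, u⟫ = 0 := by
  have h := hskew c u u
  have h2 : ⟪u, j c u⟫ = ⟪j c u, u⟫ := real_inner_comm (j c u) u
  linarith

lemma beta_anti (j : z →ₗ[ℝ] v →ₗ[ℝ] v) (β : v →ₗ[ℝ] v →ₗ[ℝ] z)
    (hskew : ∀ (a : z) (x y : v), ⟪j a x, y⟫ = -⟪x, j a y⟫)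
    (hβ : ∀ (x y : v) (c : z), ⟪β x y, c⟫ = ⟪j c x, y⟫) (p q : v) :
    β p q = -β q p := by
  apply ext_inner_right ℝ
  intro c
  rw [inner_neg_left, hβ p q c, hβ q p c, hskew c p q, real_inner_comm p (j c q)]

lemma beta_self (j : z →ₗ[ℝ] v →ₗ[ℝ] v) (β : v →ₗ[ℝ] v →ₗ[ℝ] z)
    (hskew : ∀ (a : z) (x y : v), ⟪j a x, y⟫ = -⟪x, j a y⟫)
    (hβ : ∀ (x y : v) (c : z), ⟪β x y, c⟫ = ⟪j c x, y⟫) (p : v) :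
    β p p = 0 := by
  have h := beta_anti j β hskew hβ p p
  have h2 : (2:ℝ) • β p p = 0 := by
    rw [two_smul]; nth_rewrite 2 [h]; exact add_neg_cancel _
  have := smul_eq_zero.mp h2
  exact this.resolve_left (by norm_num)

lemma Jmap_neg {m : ℕ} (j : z →ₗ[ℝ] v →ₗ[ℝ] v) (zb : OrthonormalBasis (Fin m) ℝ z)
    (u : v) : Jmap j zb (-u) = -(Jmap j zb u) := by
  simp [Jmap]

lemma Jsym {m : ℕ} (j : z →ₗ[ℝ] v →ₗ[ℝ] v)
    (hskew : ∀ (a : z) (x y : v), ⟪j a x, y⟫ = -⟪x, j a y⟫)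
    (zb : OrthonormalBasis (Fin m) ℝ z) (p q : v) :
    ⟪Jmap j zb p, q⟫ = ⟪p, Jmap j zb q⟫ := by
  rw [Jmap, Jmap, sum_inner, inner_sum]
  refine Finset.sum_congr rfl fun k _ => ?_
  rw [hskew (zb k) (j (zb k) p) q, hskew (zb k) p (j (zb k) q), neg_neg]

lemma sumJz {m : ℕ} (j : z →ₗ[ℝ] v →ₗ[ℝ] v)
    (hskew : ∀ (a : z) (x y : v), ⟪j a x, y⟫ = -⟪x, j a y⟫)
    (zb : OrthonormalBasis (Fin m) ℝ z) (p q : v) :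
    ∑ k, ⟪j (zb k) p, j (zb k) q⟫ = -⟪Jmap j zb p, q⟫ := by
  rw [Jmap, sum_inner, ← Finset.sum_neg_distrib]
  refine Finset.sum_congr rfl fun k _ => ?_
  rw [hskew (zb k) (j (zb k) p) q, neg_neg]

lemma sum_inner_basis {n : ℕ} (vb : OrthonormalBasis (Fin n) ℝ v) (p q : v) :
    ∑ i, ⟪p, vb i⟫ * ⟪q, vb i⟫ = ⟪p, q⟫ := by
  rw [← vb.sum_inner_mul_inner p q]
  refine Finset.sum_congr rfl fun i _ => ?_
  rw [real_inner_comm (vb i) q]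

lemma sumββ {n m : ℕ} (j : z →ₗ[ℝ] v →ₗ[ℝ] v) (β : v →ₗ[ℝ] v →ₗ[ℝ] z)
    (hskew : ∀ (a : z) (x y : v), ⟪j a x, y⟫ = -⟪x, j a y⟫)
    (hβ : ∀ (x y : v) (c : z), ⟪β x y, c⟫ = ⟪j c x, y⟫)
    (vb : OrthonormalBasis (Fin n) ℝ v) (zb : OrthonormalBasis (Fin m) ℝ z) (p q : v) :
    ∑ i, ⟪β p (vb i), β q (vb i)⟫ = -⟪Jmap j zb p, q⟫ := by
  calc ∑ i, ⟪β p (vb i), β q (vb i)⟫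
      = ∑ i, ∑ k, ⟪j (zb k) p, vb i⟫ * ⟪j (zb k) q, vb i⟫ := by
        refine Finset.sum_congr rfl fun i _ => ?_
        rw [← zb.sum_inner_mul_inner (β p (vb i)) (β q (vb i))]
        refine Finset.sum_congr rfl fun k _ => ?_
        rw [hβ p (vb i) (zb k), real_inner_comm (β q (vb i)) (zb k), hβ q (vb i) (zb k)]
    _ = ∑ k, ∑ i, ⟪j (zb k) p, vb i⟫ * ⟪j (zb k) q, vb i⟫ := Finset.sum_comm
    _ = ∑ k, ⟪j (zb k) p, j (zb k) q⟫ :=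
        Finset.sum_congr rfl fun k _ => sum_inner_basis vb _ _
    _ = -⟪Jmap j zb p, q⟫ := sumJz j hskew zb p q

/-- `E ↦ nabla j β X E` as a linear map. -/
noncomputable def nablaRop (j : z →ₗ[ℝ] v →ₗ[ℝ] v) (β : v →ₗ[ℝ] v →ₗ[ℝ] z)
    (X : v × z) : v × z →ₗ[ℝ] v × z :=
  LinearMap.prod
    (-((1/2 : ℝ) • ((j X.2).comp (LinearMap.fst ℝ v z))) -
      (1/2 : ℝ) • ((j.flip X.1).comp (LinearMap.snd ℝ v z)))
    ((1/2 : ℝ) • ((β X.1).comp (LinearMap.fst ℝ v z)))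

lemma nablaRop_apply (j : z →ₗ[ℝ] v →ₗ[ℝ] v) (β : v →ₗ[ℝ] v →ₗ[ℝ] z)
    (X E : v × z) : nablaRop j β X E = nabla j β X E := by
  simp [nablaRop, nabla]

/-- `E ↦ nabla j β E Z` as a linear map. -/
noncomputable def nablaLop (j : z →ₗ[ℝ] v →ₗ[ℝ] v) (β : v →ₗ[ℝ] v →ₗ[ℝ] z)
    (Z : v × z) : v × z →ₗ[ℝ] v × z :=
  LinearMap.prod
    (-((1/2 : ℝ) • ((j.flip Z.1).comp (LinearMap.snd ℝ v z))) -
      (1/2 : ℝ) • ((j Z.2).comp (LinearMap.fst ℝ v z)))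
    ((1/2 : ℝ) • ((β.flip Z.1).comp (LinearMap.fst ℝ v z)))

lemma nablaLop_apply (j : z →ₗ[ℝ] v →ₗ[ℝ] v) (β : v →ₗ[ℝ] v →ₗ[ℝ] z)
    (Z E : v × z) : nablaLop j β Z E = nabla j β E Z := by
  simp [nablaLop, nabla]

/-- `E ↦ ((0 : v), β E.1 x1)` as a linear map. -/
noncomputable def brkOp (β : v →ₗ[ℝ] v →ₗ[ℝ] z) (x1 : v) : v × z →ₗ[ℝ] v × z :=
  LinearMap.prod 0 ((β.flip x1).comp (LinearMap.fst ℝ v z))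

lemma brkOp_apply (β : v →ₗ[ℝ] v →ₗ[ℝ] z) (x1 : v) (E : v × z) :
    brkOp β x1 E = ((0 : v), β E.1 x1) := by
  simp [brkOp]

/-- `E ↦ Rcurv j β E X X` as a linear map. -/
noncomputable def Sop (j : z →ₗ[ℝ] v →ₗ[ℝ] v) (β : v →ₗ[ℝ] v →ₗ[ℝ] z)
    (X : v × z) : v × z →ₗ[ℝ] v × z :=
  nablaLop j β (nabla j β X X) - (nablaRop j β X).comp (nablaLop j β X) -
    (nablaLop j β X).comp (brkOp β X.1)

lemma Sop_apply (j : z →ₗ[ℝ] v →ₗ[ℝ] v) (β : v →ₗ[ℝ] v →ₗ[ℝ] z)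
    (X E : v × z) : Sop j β X E = Rcurv j β E X X := by
  simp only [Sop, Rcurv, LinearMap.sub_apply, LinearMap.comp_apply, nablaLop_apply,
    nablaRop_apply, brkOp_apply]

lemma trace_formula {n m : ℕ} (vb : OrthonormalBasis (Fin n) ℝ v)
    (zb : OrthonormalBasis (Fin m) ℝ z) (L : v × z →ₗ[ℝ] v × z) :
    LinearMap.trace ℝ (v × z) L
      = (∑ i, ⟪(L (vb i, (0 : z))).1, vb i⟫) + ∑ k, ⟪(L ((0 : v), zb k)).2, zb k⟫ := by
  classical
  rw [LinearMap.trace_eq_matrix_trace ℝ (vb.toBasis.prod zb.toBasis) L, Matrix.trace,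
    Fintype.sum_sum_type]
  congr 1
  · refine Finset.sum_congr rfl fun i _ => ?_
    rw [Matrix.diag_apply, LinearMap.toMatrix_apply, Module.Basis.prod_repr_inl,
      OrthonormalBasis.coe_toBasis_repr_apply, OrthonormalBasis.repr_apply_apply,
      real_inner_comm]
    have hb : (vb.toBasis.prod zb.toBasis) (Sum.inl i) = ((vb i : v), (0 : z)) := by
      rw [Prod.ext_iff]
      exact ⟨by simp [Module.Basis.prod_apply_inl_fst], by simp [Module.Basis.prod_apply_inl_snd]⟩
    rw [hb]
  · refine Finset.sum_congr rfl fun k _ => ?_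
    rw [Matrix.diag_apply, LinearMap.toMatrix_apply, Module.Basis.prod_repr_inr,
      OrthonormalBasis.coe_toBasis_repr_apply, OrthonormalBasis.repr_apply_apply,
      real_inner_comm]
    have hb : (vb.toBasis.prod zb.toBasis) (Sum.inr k) = ((0 : v), zb k) := by
      rw [Prod.ext_iff]
      exact ⟨by simp [Module.Basis.prod_apply_inr_fst], by simp [Module.Basis.prod_apply_inr_snd]⟩
    rw [hb]

lemma nabla_zero_right (j : z →ₗ[ℝ] v →ₗ[ℝ] v) (β : v →ₗ[ℝ] v →ₗ[ℝ] z)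
    (V : v × z) : nabla j β V 0 = 0 := by
  simp [nabla, Prod.ext_iff]

lemma nabla_zero_left (j : z →ₗ[ℝ] v →ₗ[ℝ] v) (β : v →ₗ[ℝ] v →ₗ[ℝ] z)
    (Z : v × z) : nabla j β 0 Z = 0 := by
  simp [nabla, Prod.ext_iff]

lemma Rcurv_zero₂ (j : z →ₗ[ℝ] v →ₗ[ℝ] v) (β : v →ₗ[ℝ] v →ₗ[ℝ] z)
    (E Z : v × z) : Rcurv j β E 0 Z = 0 := by
  have h0 : ((0 : v), (0 : z)) = (0 : v × z) := rfl
  simp [Rcurv, nabla_zero_left, nabla_zero_right, h0]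

lemma Rcurv_zero₃ (j : z →ₗ[ℝ] v →ₗ[ℝ] v) (β : v →ₗ[ℝ] v →ₗ[ℝ] z)
    (E Y : v × z) : Rcurv j β E Y 0 = 0 := by
  simp [Rcurv, nabla_zero_left, nabla_zero_right]

lemma caseA {n m : ℕ} (j : z →ₗ[ℝ] v →ₗ[ℝ] v) (β : v →ₗ[ℝ] v →ₗ[ℝ] z)
    (hskew : ∀ (a : z) (x y : v), ⟪j a x, y⟫ = -⟪x, j a y⟫)
    (hβ : ∀ (x y : v) (c : z), ⟪β x y, c⟫ = ⟪j c x, y⟫)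
    (vb : OrthonormalBasis (Fin n) ℝ v) (zb : OrthonormalBasis (Fin m) ℝ z)
    (w x : v) (a : z) :
    ∑ i, ⟪(Rcurv j β (vb i, (0 : z)) (w, (0 : z)) (x, a)).1, vb i⟫
      = (1/4) * ⟪Jmap j zb w, x⟫ + (1/2) * ⟪Jmap j zb x, w⟫ := by
  have hβ' : ∀ (x y : v) (c : z), ⟪j c x, y⟫ = ⟪β x y, c⟫ := fun x y c => (hβ x y c).symm
  have h1 : ∀ i : Fin n, ⟪(Rcurv j β (vb i, (0 : z)) (w, (0 : z)) (x, a)).1, vb i⟫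
      = -(1/4) * ⟪β w (vb i), β x (vb i)⟫ + -(1/2) * ⟪β x (vb i), β w (vb i)⟫ := by
    intro i
    have e2 : β (vb i) x = -β x (vb i) := beta_anti j β hskew hβ (vb i) x
    have e3 : β (vb i) w = -β w (vb i) := beta_anti j β hskew hβ (vb i) w
    simp [Rcurv, nabla, map_smul, smul_smul, inner_sub_left, inner_add_left,
      inner_neg_left, real_inner_smul_left, hβ', beta_self j β hskew hβ, e2, e3,
      inner_neg_left, inner_neg_right]
    ring
  rw [Finset.sum_congr rfl fun i _ => h1 i, Finset.sum_add_distrib,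
    ← Finset.mul_sum, ← Finset.mul_sum, sumββ j β hskew hβ vb zb w x,
    sumββ j β hskew hβ vb zb x w]
  ring

lemma caseB {n m : ℕ} (j : z →ₗ[ℝ] v →ₗ[ℝ] v) (β : v →ₗ[ℝ] v →ₗ[ℝ] z)
    (hskew : ∀ (a : z) (x y : v), ⟪j a x, y⟫ = -⟪x, j a y⟫)
    (hβ : ∀ (x y : v) (c : z), ⟪β x y, c⟫ = ⟪j c x, y⟫)
    (vb : OrthonormalBasis (Fin n) ℝ v) (zb : OrthonormalBasis (Fin m) ℝ z)
    (w x : v) (a : z) :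
    ∑ i, ⟪(Rcurv j β (vb i, (0 : z)) (x, a) (w, (0 : z))).1, vb i⟫
      = (1/4) * ⟪Jmap j zb x, w⟫ + (1/2) * ⟪Jmap j zb w, x⟫ := by
  have hβ' : ∀ (x y : v) (c : z), ⟪j c x, y⟫ = ⟪β x y, c⟫ := fun x y c => (hβ x y c).symm
  have h1 : ∀ i : Fin n, ⟪(Rcurv j β (vb i, (0 : z)) (x, a) (w, (0 : z))).1, vb i⟫
      = -(1/4) * ⟪β x (vb i), β w (vb i)⟫ + -(1/2) * ⟪β w (vb i), β x (vb i)⟫ := by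
    intro i
    have e2 : β (vb i) x = -β x (vb i) := beta_anti j β hskew hβ (vb i) x
    have e3 : β (vb i) w = -β w (vb i) := beta_anti j β hskew hβ (vb i) w
    simp [Rcurv, nabla, map_smul, smul_smul, inner_sub_left, inner_add_left,
      inner_neg_left, real_inner_smul_left, hβ', beta_self j β hskew hβ, e2, e3,
      inner_neg_left, inner_neg_right]
    ring
  rw [Finset.sum_congr rfl fun i _ => h1 i, Finset.sum_add_distrib,
    ← Finset.mul_sum, ← Finset.mul_sum, sumββ j β hskew hβ vb zb x w,
    sumββ j β hskew hβ vb zb w x]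
  ring

lemma caseC {m : ℕ} (j : z →ₗ[ℝ] v →ₗ[ℝ] v) (β : v →ₗ[ℝ] v →ₗ[ℝ] z)
    (hskew : ∀ (a : z) (x y : v), ⟪j a x, y⟫ = -⟪x, j a y⟫)
    (hβ : ∀ (x y : v) (c : z), ⟪β x y, c⟫ = ⟪j c x, y⟫)
    (zb : OrthonormalBasis (Fin m) ℝ z)
    (w x : v) (a : z) :
    ∑ k, ⟪(Rcurv j β ((0 : v), zb k) (w, (0 : z)) (x, a)).2, zb k⟫
      = -(1/4) * ⟪Jmap j zb w, x⟫ := by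
  have h1 : ∀ k : Fin m, ⟪(Rcurv j β ((0 : v), zb k) (w, (0 : z)) (x, a)).2, zb k⟫
      = (1/4) * ⟪j (zb k) w, j (zb k) x⟫ := by
    intro k
    simp [Rcurv, nabla, map_smul, smul_smul, inner_sub_left, inner_add_left,
      inner_neg_left, real_inner_smul_left, hβ]
    exact Or.inl (by norm_num)
  rw [Finset.sum_congr rfl fun k _ => h1 k, ← Finset.mul_sum,
    sumJz j hskew zb w x]
  ring

lemma caseD {m : ℕ} (j : z →ₗ[ℝ] v →ₗ[ℝ] v) (β : v →ₗ[ℝ] v →ₗ[ℝ] z)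
    (hskew : ∀ (a : z) (x y : v), ⟪j a x, y⟫ = -⟪x, j a y⟫)
    (hβ : ∀ (x y : v) (c : z), ⟪β x y, c⟫ = ⟪j c x, y⟫)
    (zb : OrthonormalBasis (Fin m) ℝ z)
    (w x : v) (a : z) :
    ∑ k, ⟪(Rcurv j β ((0 : v), zb k) (x, a) (w, (0 : z))).2, zb k⟫
      = -(1/4) * ⟪Jmap j zb x, w⟫ := by
  have h1 : ∀ k : Fin m, ⟪(Rcurv j β ((0 : v), zb k) (x, a) (w, (0 : z))).2, zb k⟫
      = (1/4) * ⟪j (zb k) x, j (zb k) w⟫ := by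
    intro k
    simp [Rcurv, nabla, map_smul, smul_smul, inner_sub_left, inner_add_left,
      inner_neg_left, real_inner_smul_left, hβ]
    exact Or.inl (by norm_num)
  rw [Finset.sum_congr rfl fun k _ => h1 k, ← Finset.mul_sum,
    sumJz j hskew zb x w]
  ring

/-- Every naturally reductive Riemannian manifold is of Type A, in the 2-step nilpotent
setting: if `T` satisfies (AS1) and `T_X X = 0` for all `X`, then the Ricci tensor is
cyclic parallel. -/
theorem typeA_of_AS1_naturally_reductive {n m : ℕ}
    (j : z →ₗ[ℝ] v →ₗ[ℝ] v) (β : v →ₗ[ℝ] v →ₗ[ℝ] z)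
    (hskew : ∀ (a : z) (x y : v), ⟪j a x, y⟫ = -⟪x, j a y⟫)
    (hβ : ∀ (x y : v) (c : z), ⟪β x y, c⟫ = ⟪j c x, y⟫)
    (vb : OrthonormalBasis (Fin n) ℝ v) (zb : OrthonormalBasis (Fin m) ℝ z)
    (T : v × z →ₗ[ℝ] Module.End ℝ (v × z)) (hT : AS1 j β T)
    (hNR : ∀ X : v × z, T X X = 0) :
    ∀ X : v × z, nablaRic j β vb zb X X X = 0 := by
  rintro ⟨x, a⟩
  have hXX : nabla j β (x, a) (x, a) = (-(j a x), (0 : z)) := by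
    simp [nabla, beta_self j β hskew hβ, Prod.ext_iff]
    module
  have hBz : Bmap j β vb (0 : z) = 0 := by simp [Bmap]
  have k1 : ⟪j a (Jmap j zb x), x⟫ = -⟪Jmap j zb x, j a x⟫ := hskew a _ x
  have k2 : ⟪j (Bmap j β vb a) x, x⟫ = 0 := jself j hskew _ x
  have k3 : ⟪Jmap j zb (j a x), x⟫ = ⟪Jmap j zb x, j a x⟫ := by
    rw [Jsym j hskew zb (j a x) x]
    exact real_inner_comm _ _
  have k4 : ⟪β x (Jmap j zb x), a⟫ = ⟪Jmap j zb x, j a x⟫ := by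
    rw [hβ x (Jmap j zb x) a]
    exact real_inner_comm _ _
  have hric : nablaRic j β vb zb (x, a) (x, a) (x, a) = ⟪Jmap j zb x, j a x⟫ := by
    rw [nablaRic, hXX]
    simp [nabla, rho, hBz, Jmap_neg, map_smul, smul_smul, inner_sub_left,
      inner_add_left, inner_neg_left, real_inner_smul_left, k2]
    linarith [k1, k3, k4]
  set K : Module.End ℝ (v × z) := nablaRop j β (x, a) with hK
  set S : Module.End ℝ (v × z) := Sop j β (x, a) with hS
  set TX : Module.End ℝ (v × z) := T (x, a) with hTX
  have key : ∀ E : v × z,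
      Rcurv j β E (nabla j β (x, a) (x, a)) (x, a)
        + Rcurv j β E (x, a) (nabla j β (x, a) (x, a))
      = (K * S - S * K - (TX * S - S * TX)) E := by
    intro E
    have h := hT (x, a) E (x, a) (x, a)
    rw [hNR (x, a)] at h
    rw [Rcurv_zero₂ j β E (x, a), Rcurv_zero₃ j β E (x, a), sub_zero, sub_zero] at h
    simp only [LinearMap.sub_apply, Module.End.mul_apply, hK, hS, hTX, Sop_apply,
      nablaRop_apply]
    rw [← h]
    abel
  have hM0 : LinearMap.trace ℝ (v × z) (K * S - S * K - (TX * S - S * TX)) = 0 := by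
    have c1 := LinearMap.trace_mul_comm ℝ K S
    have c2 := LinearMap.trace_mul_comm ℝ TX S
    simp only [map_sub]
    linarith
  have hsum0 :
      ((∑ i, ⟪(Rcurv j β (vb i, (0:z)) (nabla j β (x,a) (x,a)) (x,a)).1, vb i⟫)
        + ∑ i, ⟪(Rcurv j β (vb i, (0:z)) (x,a) (nabla j β (x,a) (x,a))).1, vb i⟫)
      + ((∑ k, ⟪(Rcurv j β ((0:v), zb k) (nabla j β (x,a) (x,a)) (x,a)).2, zb k⟫)
        + ∑ k, ⟪(Rcurv j β ((0:v), zb k) (x,a) (nabla j β (x,a) (x,a))).2, zb k⟫) = 0 := by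
    rw [← Finset.sum_add_distrib, ← Finset.sum_add_distrib]
    have hv : ∀ i : Fin n,
        ⟪(Rcurv j β (vb i,(0:z)) (nabla j β (x,a) (x,a)) (x,a)).1, vb i⟫
          + ⟪(Rcurv j β (vb i,(0:z)) (x,a) (nabla j β (x,a) (x,a))).1, vb i⟫
        = ⟪((K*S - S*K - (TX*S - S*TX)) (vb i,(0:z))).1, vb i⟫ := by
      intro i
      rw [← key (vb i, (0:z)), Prod.fst_add, inner_add_left]
    have hz : ∀ k : Fin m,
        ⟪(Rcurv j β ((0:v),zb k) (nabla j β (x,a) (x,a)) (x,a)).2, zb k⟫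
          + ⟪(Rcurv j β ((0:v),zb k) (x,a) (nabla j β (x,a) (x,a))).2, zb k⟫
        = ⟪((K*S - S*K - (TX*S - S*TX)) ((0:v),zb k)).2, zb k⟫ := by
      intro k
      rw [← key ((0:v), zb k), Prod.snd_add, inner_add_left]
    rw [Finset.sum_congr rfl fun i _ => hv i, Finset.sum_congr rfl fun k _ => hz k,
      ← trace_formula vb zb _]
    exact hM0
  rw [hXX] at hsum0
  rw [caseA j β hskew hβ vb zb (-(j a x)) x a, caseB j β hskew hβ vb zb (-(j a x)) x a,
    caseC j β hskew hβ zb (-(j a x)) x a, caseD j β hskew hβ zb (-(j a x)) x a] at hsum0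
  have r1 : ⟪Jmap j zb (-(j a x)), x⟫ = -⟪Jmap j zb x, j a x⟫ := by
    rw [Jmap_neg, inner_neg_left, k3]
  have r2 : ⟪Jmap j zb x, -(j a x)⟫ = -⟪Jmap j zb x, j a x⟫ := by
    rw [inner_neg_right]
  rw [r1, r2] at hsum0
  rw [hric]
  linarith
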